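/- Let A ∈ ℂ^{m×n×p}, W ∈ ℂ^{n×m×p}, γ ∈ ℂ, and define the sequence Z₀ = γ·W, Z_{j+1} = Z_j *_M Σ_{k=0}^{18} (I_M − A *_M Z_j)^k. Then for every j ≥ 0, R_M(Z_j) ⊆ R_M(W) and N_M(W) ⊆ N_M(Z_j). -/

import Mathlib

open Matrix Finset

/-- A third-order tensor in `ℂ^{m×n×p}`, given by its `p` frontal slices. -/
abbrev Tensor (m n p : ℕ) := Fin p → Matrix (Fin m) (Fin n) ℂ

/-- The transform `Â = A ×₃ M` (mode-3 product with `M`). -/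
noncomputable def hatT {m n p : ℕ} (M : Matrix (Fin p) (Fin p) ℂ) (A : Tensor m n p) :
    Tensor m n p :=
  fun l => ∑ s, M l s • A s

/-- `mat(A)`: the block-diagonal matrix whose blocks are frontal slices of `A ×₃ M`. -/
noncomputable def matT {m n p : ℕ} (M : Matrix (Fin p) (Fin p) ℂ) (A : Tensor m n p) :
    Matrix (Fin m × Fin p) (Fin n × Fin p) ℂ :=
  Matrix.blockDiagonal (hatT M A)

/-- The M-product `A *_M B`, determined by `mat(A *_M B) = mat(A)·mat(B)`. -/
noncomputable def mprod {m n k p : ℕ} (M : Matrix (Fin p) (Fin p) ℂ)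
    (A : Tensor m n p) (B : Tensor n k p) : Tensor m k p :=
  fun l => ∑ s, M⁻¹ l s • (hatT M A s * hatT M B s)

/-- The conjugate transpose `A^*`, determined by `mat(A^*) = mat(A)^*`. -/
noncomputable def mstar {m n p : ℕ} (M : Matrix (Fin p) (Fin p) ℂ) (A : Tensor m n p) :
    Tensor n m p :=
  fun l => ∑ s, M⁻¹ l s • (hatT M A s)ᴴ

/-- The identity tensor `I_M ∈ ℂ^{m×m×p}`, determined by `mat(I_M) = I`. -/
noncomputable def idT {p : ℕ} (M : Matrix (Fin p) (Fin p) ℂ) (m : ℕ) : Tensor m m p :=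
  fun l => ∑ s, M⁻¹ l s • (1 : Matrix (Fin m) (Fin m) ℂ)

/-- M-product powers of a square tensor. -/
noncomputable def mpow {m p : ℕ} (M : Matrix (Fin p) (Fin p) ℂ) (A : Tensor m m p) :
    ℕ → Tensor m m p
  | 0 => idT M m
  | k + 1 => mprod M A (mpow M A k)

/-- `R_M(A)`: the column space of `mat(A)`. -/
noncomputable def rangeM {m n p : ℕ} (M : Matrix (Fin p) (Fin p) ℂ) (A : Tensor m n p) :
    Submodule ℂ (Fin m × Fin p → ℂ) :=
  LinearMap.range (matT M A).mulVecLin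

/-- `N_M(A)`: the kernel of `mat(A)`. -/
noncomputable def kerM {m n p : ℕ} (M : Matrix (Fin p) (Fin p) ℂ) (A : Tensor m n p) :
    Submodule ℂ (Fin n × Fin p → ℂ) :=
  LinearMap.ker (matT M A).mulVecLin

/-- `rank_M(A) = rank(mat(A))`. -/
noncomputable def rankM {m n p : ℕ} (M : Matrix (Fin p) (Fin p) ℂ) (A : Tensor m n p) : ℕ :=
  (matT M A).rank

/-- The first `s` lateral slices `Q(:,1:s,:)`. -/
def latSlice {n s p : ℕ} (hsn : s ≤ n) (Q : Tensor n n p) : Tensor n s p :=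
  fun l => (Q l).submatrix id (Fin.castLE hsn)

/-- The first `s` horizontal slices `R(1:s,:,:)`. -/
def horSlice {n m s p : ℕ} (hsn : s ≤ n) (R : Tensor n m p) : Tensor s m p :=
  fun l => (R l).submatrix (Fin.castLE hsn) id

/-- Frobenius norm of a complex matrix. -/
noncomputable def frobNorm {α β : Type*} [Fintype α] [Fintype β] (X : Matrix α β ℂ) : ℝ :=
  Real.sqrt (∑ i, ∑ j, ‖X i j‖ ^ 2)

/-! The transform `mat` is multiplicative, so `mat(Z_{j+1}) = mat(Z_j) · S` with
`S = ∑ₖ (1 - mat A · mat Z_j)^k`. Since `X (1 - Y X)^k = (1 - X Y)^k X`, also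
`mat(Z_{j+1}) = S' · mat(Z_j)`. A right factor can only shrink the range and a left factor can only
enlarge the kernel, and `Z₀ = γ • W` is of both forms; induction on `j` finishes. -/

theorem Matrix.mul_sum_pow_one_sub_mul {a b R : Type*} [Fintype a] [Fintype b] [DecidableEq a]
    [DecidableEq b] [Ring R] (X : Matrix a b R) (Y : Matrix b a R) (n : ℕ) :
    X * ∑ k ∈ Finset.range n, (1 - Y * X) ^ k =
      (∑ k ∈ Finset.range n, (1 - X * Y) ^ k) * X := by
  have hstep : X * (1 - Y * X) = (1 - X * Y) * X := by
    simp only [Matrix.mul_sub, Matrix.sub_mul, Matrix.mul_one, Matrix.one_mul, Matrix.mul_assoc]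
  have hpow (k : ℕ) : X * (1 - Y * X) ^ k = (1 - X * Y) ^ k * X := by
    induction k with
    | zero => simp
    | succ k ih => rw [pow_succ, ← Matrix.mul_assoc, ih, Matrix.mul_assoc, hstep, pow_succ,
        Matrix.mul_assoc]
  rw [Matrix.mul_sum, Matrix.sum_mul]
  exact Finset.sum_congr rfl fun k _ => hpow k

section Transform

variable {m n k p : ℕ} (M : Matrix (Fin p) (Fin p) ℂ)

theorem hatT_hatT (N : Matrix (Fin p) (Fin p) ℂ) (X : Tensor m n p) :
    hatT M (hatT N X) = hatT (M * N) X := by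
  funext l
  simp only [hatT, Finset.smul_sum, smul_smul, Matrix.mul_apply, Finset.sum_smul]
  exact Finset.sum_comm

theorem hatT_one (X : Tensor m n p) : hatT 1 X = X := by
  funext l
  simp [hatT, Matrix.one_apply]

theorem hatT_hatT_inv (hM : IsUnit M.det) (X : Tensor m n p) : hatT M (hatT M⁻¹ X) = X := by
  rw [hatT_hatT, Matrix.mul_nonsing_inv M hM, hatT_one]

theorem hatT_smul (γ : ℂ) (A : Tensor m n p) : hatT M (γ • A) = γ • hatT M A := by
  funext l
  simp only [hatT, Pi.smul_apply, Finset.smul_sum, smul_comm γ]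

theorem hatT_sub (A B : Tensor m n p) : hatT M (A - B) = hatT M A - hatT M B := by
  funext l
  simp only [hatT, Pi.sub_apply, smul_sub, Finset.sum_sub_distrib]

theorem hatT_sum {ι : Type*} (s : Finset ι) (f : ι → Tensor m n p) :
    hatT M (∑ i ∈ s, f i) = ∑ i ∈ s, hatT M (f i) := by
  funext l
  simp only [hatT, Finset.sum_apply, Finset.smul_sum]
  exact Finset.sum_comm

theorem matT_smul (γ : ℂ) (A : Tensor m n p) : matT M (γ • A) = γ • matT M A := by
  rw [matT, hatT_smul, Matrix.blockDiagonal_smul, matT]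

theorem matT_sub (A B : Tensor m n p) : matT M (A - B) = matT M A - matT M B := by
  rw [matT, hatT_sub, Matrix.blockDiagonal_sub, matT, matT]

theorem matT_sum {ι : Type*} (s : Finset ι) (f : ι → Tensor m n p) :
    matT M (∑ i ∈ s, f i) = ∑ i ∈ s, matT M (f i) := by
  rw [matT, hatT_sum]
  exact map_sum (Matrix.blockDiagonalAddMonoidHom _ _ _ _) _ s

variable {M}

theorem hatT_mprod (hM : IsUnit M.det) (A : Tensor m n p) (B : Tensor n k p) :
    hatT M (mprod M A B) = fun l => hatT M A l * hatT M B l :=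
  hatT_hatT_inv M hM _

theorem hatT_idT (hM : IsUnit M.det) : hatT M (idT M m) = 1 :=
  hatT_hatT_inv M hM _

theorem matT_mprod (hM : IsUnit M.det) (A : Tensor m n p) (B : Tensor n k p) :
    matT M (mprod M A B) = matT M A * matT M B := by
  unfold matT
  rw [hatT_mprod hM, Matrix.blockDiagonal_mul]

theorem matT_idT (hM : IsUnit M.det) : matT M (idT M m) = 1 := by
  rw [matT, hatT_idT hM, Matrix.blockDiagonal_one]

theorem matT_mpow (hM : IsUnit M.det) (A : Tensor m m p) (j : ℕ) :
    matT M (mpow M A j) = matT M A ^ j := by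
  induction j with
  | zero => exact matT_idT hM
  | succ j ih => rw [mpow, matT_mprod hM, ih, pow_succ']

end Transform

section RangeKer

variable {a b c p : ℕ} {M : Matrix (Fin p) (Fin p) ℂ}

theorem rangeM_le_of_matT_eq_mul {X : Tensor a b p} {W : Tensor a c p}
    (S : Matrix (Fin c × Fin p) (Fin b × Fin p) ℂ) (h : matT M X = matT M W * S) :
    rangeM M X ≤ rangeM M W := by
  rw [rangeM, rangeM, h, Matrix.mulVecLin_mul]
  exact LinearMap.range_comp_le_range _ _

theorem kerM_le_of_matT_eq_mul {X : Tensor a b p} {W : Tensor c b p}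
    (S : Matrix (Fin a × Fin p) (Fin c × Fin p) ℂ) (h : matT M X = S * matT M W) :
    kerM M W ≤ kerM M X := by
  rw [kerM, kerM, h, Matrix.mulVecLin_mul]
  exact LinearMap.ker_le_ker_comp _ _

end RangeKer

/-- The hyperpower iterates starting from `Z₀ = γ·W` keep their range inside `R_M(W)` and
their null space above `N_M(W)`. -/
theorem hpi19_range_null_invariance {m n p : ℕ}
    (M : Matrix (Fin p) (Fin p) ℂ) (hM : IsUnit M.det)
    (A : Tensor m n p) (W : Tensor n m p) (γ : ℂ)
    (Z : ℕ → Tensor n m p)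
    (hZ0 : Z 0 = γ • W)
    (hZ : ∀ j, Z (j + 1) =
      mprod M (Z j) (∑ k ∈ Finset.range 19, mpow M (idT M m - mprod M A (Z j)) k)) :
    ∀ j, rangeM M (Z j) ≤ rangeM M W ∧ kerM M W ≤ kerM M (Z j) := by
  intro j
  induction j with
  | zero =>
    have hright :
        matT M (Z 0) = matT M W * (γ • 1 : Matrix (Fin m × Fin p) (Fin m × Fin p) ℂ) := by
      rw [hZ0, matT_smul, Matrix.mul_smul, Matrix.mul_one]
    have hleft :
        matT M (Z 0) = (γ • 1 : Matrix (Fin n × Fin p) (Fin n × Fin p) ℂ) * matT M W := by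
      rw [hZ0, matT_smul, Matrix.smul_mul, Matrix.one_mul]
    exact ⟨rangeM_le_of_matT_eq_mul _ hright, kerM_le_of_matT_eq_mul _ hleft⟩
  | succ j ih =>
    have hright : matT M (Z (j + 1)) =
        matT M (Z j) * ∑ k ∈ Finset.range 19, (1 - matT M A * matT M (Z j)) ^ k := by
      simp only [hZ j, matT_mprod hM, matT_sum, matT_mpow hM, matT_sub, matT_idT hM]
    have hleft : matT M (Z (j + 1)) =
        (∑ k ∈ Finset.range 19, (1 - matT M (Z j) * matT M A) ^ k) * matT M (Z j) := by
      rw [hright, Matrix.mul_sum_pow_one_sub_mul]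
    exact ⟨(rangeM_le_of_matT_eq_mul _ hright).trans ih.1,
      ih.2.trans (kerM_le_of_matT_eq_mul _ hleft)⟩
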